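/- arXiv:2511.13299 — 3 statements merged into one kernel-verified Lean document; each statement's English description precedes it below -/
import Mathlib

section
/- For every real Banach space E there exists a free Banach f-algebra over E; that is, there exist a Banach f-algebra A and a linear isometric embedding η : E → A such that for every Banach f-algebra B and every linear operator T : E → B with ‖T‖ ≤ 1 there exists a unique lattice-algebra homomorphism T̂ : A → B with T̂ ∘ η = T and ‖T̂‖ = ‖T‖. -/
/-!
Evaluate every formal lattice-algebra expression in `E` simultaneously under all contractions
`T : E → B` into all Banach f-algebras `B`; the closure of these evaluations in the `ℓ^∞`-product
of the algebras `B` is the free Banach f-algebra. In any given `B` the norm of an evaluation is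
at most its norm in the product, so evaluation extends by continuity to a lattice-algebra
homomorphism. Rescaling the multiplication of `B` by `c = ‖T‖` makes `c⁻¹ • T` a contraction,
which sharpens the bound to `‖T̂‖ ≤ ‖T‖`. Hahn–Banach shows that `E` embeds isometrically, and
uniqueness holds because the evaluated expressions are dense.
-/

/-- A bundled Banach f-algebra. -/
structure BanachFAlg : Type 1 where
  carrier : Type
  [grp : NormedAddCommGroup carrier]
  [lat : Lattice carrier]
  [ordgrp : IsOrderedAddMonoid carrier]
  [solid : HasSolidNorm carrier]
  [mod : NormedSpace ℝ carrier]
  [compl : CompleteSpace carrier]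
  mul : carrier → carrier → carrier
  mul_assoc' : ∀ a b c, mul (mul a b) c = mul a (mul b c)
  add_mul' : ∀ a b c, mul (a + b) c = mul a c + mul b c
  mul_add' : ∀ a b c, mul a (b + c) = mul a b + mul a c
  smul_mul' : ∀ (r : ℝ) (a b), mul (r • a) b = r • mul a b
  mul_smul' : ∀ (r : ℝ) (a b), mul a (r • b) = r • mul a b
  mul_nonneg' : ∀ a b, 0 ≤ a → 0 ≤ b → 0 ≤ mul a b
  inf_mul_left' : ∀ a b c, a ⊓ b = 0 → 0 ≤ c → mul c a ⊓ b = 0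
  inf_mul_right' : ∀ a b c, a ⊓ b = 0 → 0 ≤ c → mul a c ⊓ b = 0
  norm_mul_le' : ∀ a b, ‖mul a b‖ ≤ ‖a‖ * ‖b‖

attribute [instance] BanachFAlg.grp BanachFAlg.lat BanachFAlg.ordgrp BanachFAlg.solid BanachFAlg.mod BanachFAlg.compl

/-- Lattice-algebra homomorphism between bundled Banach f-algebras. -/
def IsLatAlgHom (A B : BanachFAlg) (T : A.carrier →L[ℝ] B.carrier) : Prop :=
  (∀ a b, T (A.mul a b) = B.mul (T a) (T b)) ∧ (∀ a b, T (a ⊔ b) = T a ⊔ T b)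

/-- `(A, η)` is a free Banach f-algebra over `E`. -/
def IsFreeBanachFAlg (E : Type) [NormedAddCommGroup E] [NormedSpace ℝ E]
    (A : BanachFAlg) (η : E →ₗᵢ[ℝ] A.carrier) : Prop :=
  ∀ (B : BanachFAlg) (T : E →L[ℝ] B.carrier), ‖T‖ ≤ 1 →
    ∃! That : A.carrier →L[ℝ] B.carrier,
      IsLatAlgHom A B That ∧ (∀ x, That (η x) = T x) ∧ ‖That‖ = ‖T‖

open Filter Topology
open scoped ENNReal

section LatticeOrderedGroup

variable {X : Type*} [AddCommGroup X] [Lattice X] [IsOrderedAddMonoid X]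

theorem nonneg_of_two_pow_nsmul_nonneg {x : X} : ∀ k : ℕ, 0 ≤ 2 ^ k • x → 0 ≤ x
  | 0, h => by simpa using h
  | k + 1, h => nonneg_of_two_pow_nsmul_nonneg k <|
      nsmul_two_semiclosed (by rwa [← mul_nsmul, ← pow_succ])

end LatticeOrderedGroup

section SolidNorm

variable {X : Type*} [NormedAddCommGroup X] [Lattice X] [IsOrderedAddMonoid X] [HasSolidNorm X]
  [NormedSpace ℝ X]

-- `BanachFAlg` does not postulate that positive scalars preserve the order; it follows from the
-- closedness of the positive cone by approximating `c` with dyadic rationals.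
theorem HasSolidNorm.smul_nonneg {c : ℝ} (hc : 0 ≤ c) {x : X} (hx : 0 ≤ x) : 0 ≤ c • x := by
  have hdyadic : ∀ k : ℕ, 0 ≤ ((⌊c * 2 ^ k⌋₊ : ℝ) / 2 ^ k) • x := fun k => by
    refine nonneg_of_two_pow_nsmul_nonneg k ?_
    rw [← Nat.cast_smul_eq_nsmul ℝ, smul_smul, Nat.cast_pow, Nat.cast_ofNat,
      mul_div_cancel₀ _ (by positivity), Nat.cast_smul_eq_nsmul]
    exact nsmul_nonneg hx _
  have hlim : Tendsto (fun k : ℕ => (⌊c * 2 ^ k⌋₊ : ℝ) / 2 ^ k) atTop (𝓝 c) :=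
    (tendsto_nat_floor_mul_div_atTop hc).comp (tendsto_pow_atTop_atTop_of_one_lt one_lt_two)
  exact isClosed_nonneg.mem_of_tendsto (hlim.smul_const x) (Eventually.of_forall hdyadic)

instance HasSolidNorm.posSMulMono : PosSMulMono ℝ X where
  smul_le_smul_of_nonneg_left c hc a b hab := by
    simpa only [smul_sub, sub_nonneg] using HasSolidNorm.smul_nonneg hc (sub_nonneg.2 hab)

theorem smul_inf_eq_zero_of_le_one {c : ℝ} (hc0 : 0 ≤ c) (hc1 : c ≤ 1) {a b : X}
    (h : a ⊓ b = 0) : c • a ⊓ b = 0 := by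
  have ha : 0 ≤ a := h ▸ inf_le_left
  exact le_antisymm (h ▸ inf_le_inf_right b (smul_le_of_le_one_left ha hc1))
    (le_inf (smul_nonneg hc0 ha) (h ▸ inf_le_right))

end SolidNorm

namespace BanachFAlg

variable (A : BanachFAlg)

noncomputable def mulCLM : A.carrier →L[ℝ] A.carrier →L[ℝ] A.carrier :=
  LinearMap.mkContinuous₂ (LinearMap.mk₂ ℝ A.mul A.add_mul' A.smul_mul' A.mul_add' A.mul_smul') 1
    fun a b => by rw [one_mul]; exact A.norm_mul_le' a b

theorem continuous_mul : Continuous fun p : A.carrier × A.carrier => A.mul p.1 p.2 :=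
  A.mulCLM.continuous₂

theorem zero_mul (a : A.carrier) : A.mul 0 a = 0 :=
  A.mulCLM.map_zero₂ a

noncomputable def real : BanachFAlg where
  carrier := ℝ
  mul := (· * ·)
  mul_assoc' := mul_assoc
  add_mul' := add_mul
  mul_add' := mul_add
  smul_mul' := smul_mul_assoc
  mul_smul' := mul_smul_comm
  mul_nonneg' _ _ := mul_nonneg
  inf_mul_left' a b c h hc := by
    rcases min_eq_iff.1 h with ⟨rfl, hb⟩ | ⟨rfl, ha⟩
    · simpa using hb
    · simpa using mul_nonneg hc ha
  inf_mul_right' a b c h hc := by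
    rcases min_eq_iff.1 h with ⟨rfl, hb⟩ | ⟨rfl, ha⟩
    · simpa using hb
    · simpa using mul_nonneg ha hc
  norm_mul_le' a b := (norm_mul a b).le

noncomputable def rescale (c : ℝ) (hc0 : 0 ≤ c) (hc1 : c ≤ 1) : BanachFAlg where
  carrier := A.carrier
  mul a b := c • A.mul a b
  mul_assoc' a b d := by simp only [A.smul_mul', A.mul_smul', A.mul_assoc']
  add_mul' a b d := by simp only [A.add_mul', smul_add]
  mul_add' a b d := by simp only [A.mul_add', smul_add]
  smul_mul' r a b := by simp only [A.smul_mul', smul_comm c r]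
  mul_smul' r a b := by simp only [A.mul_smul', smul_comm c r]
  mul_nonneg' a b ha hb := smul_nonneg hc0 (A.mul_nonneg' a b ha hb)
  inf_mul_left' a b d h hd := smul_inf_eq_zero_of_le_one hc0 hc1 (A.inf_mul_left' a b d h hd)
  inf_mul_right' a b d h hd := smul_inf_eq_zero_of_le_one hc0 hc1 (A.inf_mul_right' a b d h hd)
  norm_mul_le' a b := by
    rw [norm_smul, Real.norm_of_nonneg hc0]
    exact (mul_le_of_le_one_left (norm_nonneg _) hc1).trans (A.norm_mul_le' a b)

variable {A} in
theorem isLatAlgHom_rescale_smul {c : ℝ} (hc0 : 0 < c) (hc1 : c ≤ 1) :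
    IsLatAlgHom (A.rescale c hc0.le hc1) A (c • ContinuousLinearMap.id ℝ A.carrier) :=
  ⟨fun (a b : A.carrier) => show c • (c • A.mul a b) = A.mul (c • a) (c • b) by
      rw [A.smul_mul', A.mul_smul'],
    fun a b => (OrderIso.smulRight hc0).map_sup a b⟩

end BanachFAlg

section LpLattice

variable {ι : Type*} {E : ι → Type*} [∀ i, NormedAddCommGroup (E i)] [∀ i, Lattice (E i)]
  [∀ i, IsOrderedAddMonoid (E i)] [∀ i, HasSolidNorm (E i)]

theorem Memℓp.infty_sup {f g : ∀ i, E i} (hf : Memℓp f ∞) (hg : Memℓp g ∞) :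
    Memℓp (f ⊔ g) ∞ := by
  obtain ⟨C, hC⟩ := memℓp_infty_iff.1 hf
  obtain ⟨D, hD⟩ := memℓp_infty_iff.1 hg
  refine memℓp_infty ⟨C + D, ?_⟩
  rintro _ ⟨i, rfl⟩
  exact (norm_sup_le_add _ _).trans (add_le_add (hC ⟨i, rfl⟩) (hD ⟨i, rfl⟩))

theorem Memℓp.infty_inf {f g : ∀ i, E i} (hf : Memℓp f ∞) (hg : Memℓp g ∞) :
    Memℓp (f ⊓ g) ∞ := by
  simpa only [neg_sup, neg_neg] using (hf.neg.infty_sup hg.neg).neg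

namespace lp

instance instLatticeInfty : Lattice (lp E ∞) :=
  Subtype.lattice (α := ∀ i, E i) (fun _ _ => Memℓp.infty_sup) (fun _ _ => Memℓp.infty_inf)

theorem le_def {f g : lp E ∞} : f ≤ g ↔ ∀ i, f i ≤ g i := Iff.rfl

instance : IsOrderedAddMonoid (lp E ∞) where
  add_le_add_left _ _ h k i := add_le_add_left (h i) (k i)

instance : HasSolidNorm (lp E ∞) where
  solid _ g h := lp.norm_le_of_forall_le (norm_nonneg g) fun i =>
    (HasSolidNorm.solid (h i)).trans (lp.norm_apply_le_norm ENNReal.top_ne_zero g i)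

end lp

end LpLattice

namespace BanachFAlg

variable {ι : Type} (C : ι → BanachFAlg)

theorem norm_mul_apply_le (f g : lp (fun i => (C i).carrier) ∞) (i : ι) :
    ‖(C i).mul (f i) (g i)‖ ≤ ‖f‖ * ‖g‖ :=
  ((C i).norm_mul_le' _ _).trans <| mul_le_mul (lp.norm_apply_le_norm ENNReal.top_ne_zero f i)
    (lp.norm_apply_le_norm ENNReal.top_ne_zero g i) (norm_nonneg _) (norm_nonneg _)

noncomputable abbrev lpInfty : BanachFAlg where
  carrier := lp (fun i => (C i).carrier) ∞
  mul f g := ⟨fun i => (C i).mul (f i) (g i),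
    memℓp_infty ⟨‖f‖ * ‖g‖, by rintro _ ⟨i, rfl⟩; exact norm_mul_apply_le C f g i⟩⟩
  mul_assoc' f g h := lp.ext <| funext fun i => (C i).mul_assoc' _ _ _
  add_mul' f g h := lp.ext <| funext fun i => (C i).add_mul' _ _ _
  mul_add' f g h := lp.ext <| funext fun i => (C i).mul_add' _ _ _
  smul_mul' r f g := lp.ext <| funext fun i => (C i).smul_mul' _ _ _
  mul_smul' r f g := lp.ext <| funext fun i => (C i).mul_smul' _ _ _
  mul_nonneg' f g hf hg i := (C i).mul_nonneg' _ _ (lp.le_def.1 hf i) (lp.le_def.1 hg i)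
  inf_mul_left' f g h hfg hh := lp.ext <| funext fun i =>
    (C i).inf_mul_left' _ _ _ (congrFun (congrArg Subtype.val hfg) i) (lp.le_def.1 hh i)
  inf_mul_right' f g h hfg hh := lp.ext <| funext fun i =>
    (C i).inf_mul_right' _ _ _ (congrFun (congrArg Subtype.val hfg) i) (lp.le_def.1 hh i)
  norm_mul_le' f g := lp.norm_le_of_forall_le (by positivity) (norm_mul_apply_le C f g)

theorem isLatAlgHom_lpInfty_evalCLM (i : ι) :
    IsLatAlgHom (lpInfty C) (C i) (lp.evalCLM ℝ (fun i => (C i).carrier) ∞ i) :=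
  ⟨fun _ _ => rfl, fun _ _ => rfl⟩

end BanachFAlg

namespace lp

variable {ι : Type*} {E : Type*} {F : ι → Type*} [NormedAddCommGroup E] [NormedSpace ℝ E]
  [∀ i, NormedAddCommGroup (F i)] [∀ i, NormedSpace ℝ (F i)]

noncomputable def inftyLift (T : ∀ i, E →L[ℝ] F i) (hT : ∀ i, ‖T i‖ ≤ 1) : E →L[ℝ] lp F ∞ :=
  have hle (i : ι) (x : E) : ‖T i x‖ ≤ ‖x‖ := ((T i).le_of_opNorm_le (hT i) x).trans_eq (one_mul _)
  LinearMap.mkContinuous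
    { toFun x := ⟨fun i => T i x, memℓp_infty ⟨‖x‖, by rintro _ ⟨i, rfl⟩; exact hle i x⟩⟩
      map_add' x y := lp.ext <| funext fun i => map_add (T i) x y
      map_smul' r x := lp.ext <| funext fun i => map_smul (T i) r x }
    1 fun x => by
      rw [one_mul]
      exact lp.norm_le_of_forall_le (norm_nonneg x) fun i => hle i x

theorem norm_inftyLift_le (T : ∀ i, E →L[ℝ] F i) (hT : ∀ i, ‖T i‖ ≤ 1) : ‖inftyLift T hT‖ ≤ 1 := by
  unfold inftyLift
  exact LinearMap.mkContinuous_norm_le _ zero_le_one _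

end lp

namespace BanachFAlg

variable (B : BanachFAlg) (S : Submodule ℝ B.carrier)

noncomputable def ofClosedSubmodule (hS : IsClosed (S : Set B.carrier))
    (hmul : ∀ ⦃a b⦄, a ∈ S → b ∈ S → B.mul a b ∈ S)
    (hsup : ∀ ⦃a b⦄, a ∈ S → b ∈ S → a ⊔ b ∈ S) : BanachFAlg :=
  letI : Lattice S := Subtype.lattice hsup fun a b ha hb => by
    simpa only [neg_sup, neg_neg] using S.neg_mem (hsup (S.neg_mem ha) (S.neg_mem hb))
  { carrier := S
    ordgrp := { add_le_add_left := fun _ _ h c => add_le_add_left (α := B.carrier) h c }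
    solid := ⟨fun _ _ h => HasSolidNorm.solid (α := B.carrier) h⟩
    compl := hS.completeSpace_coe
    mul a b := ⟨B.mul a b, hmul a.2 b.2⟩
    mul_assoc' a b c := Subtype.ext (B.mul_assoc' a b c)
    add_mul' a b c := Subtype.ext (B.add_mul' a b c)
    mul_add' a b c := Subtype.ext (B.mul_add' a b c)
    smul_mul' r a b := Subtype.ext (B.smul_mul' r a b)
    mul_smul' r a b := Subtype.ext (B.mul_smul' r a b)
    mul_nonneg' a b := B.mul_nonneg' a b
    inf_mul_left' a b c h hc := Subtype.ext (B.inf_mul_left' a b c (congrArg Subtype.val h) hc)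
    inf_mul_right' a b c h hc := Subtype.ext (B.inf_mul_right' a b c (congrArg Subtype.val h) hc)
    norm_mul_le' a b := B.norm_mul_le' a b }

theorem isLatAlgHom_subtypeL (hS : IsClosed (S : Set B.carrier))
    (hmul : ∀ ⦃a b⦄, a ∈ S → b ∈ S → B.mul a b ∈ S)
    (hsup : ∀ ⦃a b⦄, a ∈ S → b ∈ S → a ⊔ b ∈ S) :
    IsLatAlgHom (B.ofClosedSubmodule S hS hmul hsup) B S.subtypeL :=
  ⟨fun _ _ => rfl, fun _ _ => rfl⟩

end BanachFAlg

inductive FreeTerm (E : Type) : Type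
  | of : E → FreeTerm E
  | add : FreeTerm E → FreeTerm E → FreeTerm E
  | smul : ℝ → FreeTerm E → FreeTerm E
  | mul : FreeTerm E → FreeTerm E → FreeTerm E
  | sup : FreeTerm E → FreeTerm E → FreeTerm E

namespace FreeTerm

variable {E : Type} [NormedAddCommGroup E] [NormedSpace ℝ E]

noncomputable def eval (B : BanachFAlg) (T : E →L[ℝ] B.carrier) : FreeTerm E → B.carrier
  | of x => T x
  | add u v => eval B T u + eval B T v
  | smul r u => r • eval B T u
  | mul u v => B.mul (eval B T u) (eval B T v)
  | sup u v => eval B T u ⊔ eval B T v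

theorem map_eval {A B : BanachFAlg} {Φ : A.carrier →L[ℝ] B.carrier} (hΦ : IsLatAlgHom A B Φ)
    {T : E →L[ℝ] A.carrier} {T' : E →L[ℝ] B.carrier} (hT : ∀ x, Φ (T x) = T' x) :
    ∀ w, Φ (eval A T w) = eval B T' w
  | of x => hT x
  | add u v => by simp only [eval, map_add, map_eval hΦ hT u, map_eval hΦ hT v]
  | smul r u => by simp only [eval, map_smul, map_eval hΦ hT u]
  | mul u v => by simp only [eval, hΦ.1, map_eval hΦ hT u, map_eval hΦ hT v]
  | sup u v => by simp only [eval, hΦ.2, map_eval hΦ hT u, map_eval hΦ hT v]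

theorem eval_zero (B : BanachFAlg) : ∀ w : FreeTerm E, eval B 0 w = 0
  | of _ => rfl
  | add u v => by simp only [eval, eval_zero B u, eval_zero B v, add_zero]
  | smul r u => by simp only [eval, eval_zero B u, smul_zero]
  | mul u v => by simp only [eval, eval_zero B u, eval_zero B v, B.zero_mul]
  | sup u v => by simp only [eval, eval_zero B u, eval_zero B v, sup_idem]

end FreeTerm

-- Indexing by the profile `w ↦ ‖w.eval B T‖` rather than by the pair `(B, T)` keeps the index
-- type in `Type`; pairs with the same profile would contribute isometric coordinates.
def NormProfile (E : Type) [NormedAddCommGroup E] [NormedSpace ℝ E] : Type :=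
  {ν : FreeTerm E → ℝ //
    ∃ (B : BanachFAlg) (T : E →L[ℝ] B.carrier), ‖T‖ ≤ 1 ∧ ν = fun w => ‖w.eval B T‖}

namespace NormProfile

variable {E : Type} [NormedAddCommGroup E] [NormedSpace ℝ E]

noncomputable def alg (ν : NormProfile E) : BanachFAlg := ν.2.choose

noncomputable def map (ν : NormProfile E) : E →L[ℝ] ν.alg.carrier := ν.2.choose_spec.choose

theorem norm_map_le (ν : NormProfile E) : ‖ν.map‖ ≤ 1 := ν.2.choose_spec.choose_spec.1

theorem norm_eval (ν : NormProfile E) (w : FreeTerm E) : ‖w.eval ν.alg ν.map‖ = ν.1 w :=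
  (congrFun ν.2.choose_spec.choose_spec.2 w).symm

noncomputable def mk (B : BanachFAlg) (T : E →L[ℝ] B.carrier) (hT : ‖T‖ ≤ 1) : NormProfile E :=
  ⟨fun w => ‖w.eval B T‖, B, T, hT, rfl⟩

end NormProfile

namespace FreeBanachFAlg

open FreeTerm

variable (E : Type) [NormedAddCommGroup E] [NormedSpace ℝ E]

noncomputable abbrev ambient : BanachFAlg := BanachFAlg.lpInfty (NormProfile.alg (E := E))

noncomputable def embed : E →L[ℝ] (ambient E).carrier :=
  lp.inftyLift (fun ν => ν.map) NormProfile.norm_map_le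

variable {E}

theorem eval_embed_apply (w : FreeTerm E) (ν : NormProfile E) :
    w.eval (ambient E) (embed E) ν = w.eval ν.alg ν.map :=
  map_eval (BanachFAlg.isLatAlgHom_lpInfty_evalCLM _ ν) (fun _ => rfl) w

theorem norm_eval_le {B : BanachFAlg} {T : E →L[ℝ] B.carrier} (hT : ‖T‖ ≤ 1) (w : FreeTerm E) :
    ‖w.eval B T‖ ≤ ‖w.eval (ambient E) (embed E)‖ := by
  have h := lp.norm_apply_le_norm ENNReal.top_ne_zero (w.eval (ambient E) (embed E))
    (NormProfile.mk B T hT)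
  rwa [eval_embed_apply, NormProfile.norm_eval] at h

theorem norm_eval_le_mul {B : BanachFAlg} {T : E →L[ℝ] B.carrier} (hT : ‖T‖ ≤ 1)
    (w : FreeTerm E) : ‖w.eval B T‖ ≤ ‖T‖ * ‖w.eval (ambient E) (embed E)‖ := by
  rcases (norm_nonneg T).eq_or_lt with hT0 | hT0
  · rw [norm_eq_zero.1 hT0.symm, eval_zero, norm_zero, norm_zero, zero_mul]
  -- `c⁻¹ • T` is a contraction into `B.rescale c`, which `c • id` maps back to `B`.
  · set c := ‖T‖
    have hT' : ‖c⁻¹ • T‖ ≤ 1 := by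
      rw [norm_smul, norm_inv, Real.norm_of_nonneg hT0.le, inv_mul_cancel₀ hT0.ne']
    let T' : E →L[ℝ] (B.rescale c hT0.le hT).carrier := c⁻¹ • T
    have h := map_eval (B.isLatAlgHom_rescale_smul hT0 hT) (T := T') (T' := T)
      (fun x => smul_inv_smul₀ hT0.ne' (T x)) w
    rw [← h]
    refine (norm_smul c (eval (B.rescale c hT0.le hT) T' w : B.carrier)).trans_le ?_
    rw [Real.norm_of_nonneg hT0.le]
    exact mul_le_mul_of_nonneg_left (norm_eval_le (T := T') hT' w) hT0.le

variable (E) in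
noncomputable def termSubmodule : Submodule ℝ (ambient E).carrier where
  carrier := Set.range (eval (ambient E) (embed E))
  add_mem' := by rintro _ _ ⟨u, rfl⟩ ⟨v, rfl⟩; exact ⟨add u v, rfl⟩
  zero_mem' := ⟨smul 0 (of 0), zero_smul ℝ _⟩
  smul_mem' := by rintro r _ ⟨u, rfl⟩; exact ⟨smul r u, rfl⟩

theorem map₂_mem_topologicalClosure
    {f : (ambient E).carrier → (ambient E).carrier → (ambient E).carrier}
    (hf : Continuous fun p : _ × _ => f p.1 p.2) (g : FreeTerm E → FreeTerm E → FreeTerm E)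
    (hg : ∀ u v, f (u.eval (ambient E) (embed E)) (v.eval (ambient E) (embed E)) =
      (g u v).eval (ambient E) (embed E))
    ⦃a b : (ambient E).carrier⦄ (ha : a ∈ (termSubmodule E).topologicalClosure)
    (hb : b ∈ (termSubmodule E).topologicalClosure) :
    f a b ∈ (termSubmodule E).topologicalClosure :=
  map_mem_closure₂ hf ha hb fun _ ⟨u, hu⟩ _ ⟨v, hv⟩ => ⟨g u v, by rw [← hu, ← hv, hg]⟩

variable (E) in
noncomputable def alg : BanachFAlg :=
  (ambient E).ofClosedSubmodule (termSubmodule E).topologicalClosure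
    (termSubmodule E).isClosed_topologicalClosure
    (map₂_mem_topologicalClosure (ambient E).continuous_mul mul fun _ _ => rfl)
    (map₂_mem_topologicalClosure continuous_sup sup fun _ _ => rfl)

theorem norm_embed (x : E) : ‖embed E x‖ = ‖x‖ := by
  refine le_antisymm ?_ ?_
  · exact ((embed E).le_of_opNorm_le (lp.norm_inftyLift_le _ _) x).trans_eq (one_mul _)
  obtain ⟨g, hg, hgx⟩ := exists_dual_vector'' ℝ x
  calc ‖x‖ = ‖g x‖ := by simp [hgx]
    _ ≤ ‖embed E x‖ := norm_eval_le (B := BanachFAlg.real) (T := g) hg (of x)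

variable (E) in
noncomputable def η : E →ₗᵢ[ℝ] (alg E).carrier where
  toLinearMap := (embed E).toLinearMap.codRestrict _ fun x =>
    (termSubmodule E).le_topologicalClosure ⟨of x, rfl⟩
  norm_map' := norm_embed

noncomputable def term (w : FreeTerm E) : (alg E).carrier :=
  w.eval (alg E) (η E).toContinuousLinearMap

variable (E) in
noncomputable def incl : (alg E).carrier →L[ℝ] (ambient E).carrier :=
  (termSubmodule E).topologicalClosure.subtypeL

theorem isometry_incl : Isometry (incl E) :=
  AddMonoidHomClass.isometry_of_norm _ fun _ => rfl

theorem incl_mem_closure (a : (alg E).carrier) :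
    incl E a ∈ closure (Set.range (eval (ambient E) (embed E))) :=
  (a : (termSubmodule E).topologicalClosure).2

theorem incl_term (w : FreeTerm E) : incl E (term w) = w.eval (ambient E) (embed E) :=
  map_eval ((ambient E).isLatAlgHom_subtypeL _ _ _ _) (fun _ => rfl) w

theorem denseRange_term : DenseRange (term (E := E)) := by
  refine (isometry_incl.isEmbedding.isInducing.dense_iff).2 fun a => ?_
  rw [← Set.range_comp, show incl E ∘ term = eval (ambient E) (embed E) from funext incl_term]
  exact incl_mem_closure a

variable (E) in
noncomputable def termInclusion : termSubmodule E →L[ℝ] (alg E).carrier :=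
  (Submodule.inclusion (termSubmodule E).le_topologicalClosure).mkContinuous 1 fun _ =>
    (one_mul _).ge

theorem isometry_termInclusion : Isometry (termInclusion E) :=
  AddMonoidHomClass.isometry_of_norm _ fun _ => rfl

theorem term_eq_termInclusion (w : FreeTerm E) : term w = termInclusion E ⟨_, w, rfl⟩ :=
  isometry_incl.injective (incl_term w)

theorem denseRange_termInclusion : DenseRange (termInclusion E) :=
  denseRange_term.mono <| Set.range_subset_iff.2 fun w => ⟨_, (term_eq_termInclusion w).symm⟩

section Lift

variable {B : BanachFAlg} {T : E →L[ℝ] B.carrier} (hT : ‖T‖ ≤ 1)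
include hT

theorem eval_eq_of_eval_embed_eq {u v : FreeTerm E}
    (h : u.eval (ambient E) (embed E) = v.eval (ambient E) (embed E)) :
    u.eval B T = v.eval B T := by
  have huv := norm_eval_le hT (add u (smul (-1) v))
  simp only [eval, h, neg_one_smul, add_neg_cancel, norm_zero, ← sub_eq_add_neg] at huv
  exact sub_eq_zero.1 (norm_le_zero_iff.1 huv)

theorem eval_choose_eq (d : termSubmodule E) {w : FreeTerm E}
    (hw : w.eval (ambient E) (embed E) = d) : d.2.choose.eval B T = w.eval B T :=
  eval_eq_of_eval_embed_eq hT (d.2.choose_spec.trans hw.symm)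

noncomputable def liftTerms : termSubmodule E →L[ℝ] B.carrier :=
  LinearMap.mkContinuous
    { toFun d := d.2.choose.eval B T
      map_add' d e := by
        obtain ⟨u, hu⟩ := d.2
        obtain ⟨v, hv⟩ := e.2
        rw [eval_choose_eq hT d hu, eval_choose_eq hT e hv,
          eval_choose_eq hT (d + e) (w := add u v) (by rw [eval, hu, hv]; rfl)]
        rfl
      map_smul' r d := by
        obtain ⟨u, hu⟩ := d.2
        rw [eval_choose_eq hT d hu,
          eval_choose_eq hT (r • d) (w := smul r u) (by rw [eval, hu]; rfl)]
        rfl }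
    ‖T‖ fun d => by
      have h := norm_eval_le_mul hT d.2.choose
      rwa [d.2.choose_spec] at h

noncomputable def lift : (alg E).carrier →L[ℝ] B.carrier :=
  (liftTerms hT).extend (termInclusion E)

theorem lift_term (w : FreeTerm E) : lift hT (term w) = w.eval B T := by
  rw [lift, term_eq_termInclusion, ContinuousLinearMap.extend_eq _ denseRange_termInclusion
    isometry_termInclusion.isUniformInducing]
  exact eval_choose_eq hT _ rfl

theorem lift_η (x : E) : lift hT (η E x) = T x :=
  lift_term hT (of x)

theorem isLatAlgHom_lift : IsLatAlgHom (alg E) B (lift hT) := by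
  constructor
  · refine denseRange_term.induction_on₂ (isClosed_eq ?_ ?_) fun u v => ?_
    · exact (lift hT).continuous.comp (alg E).continuous_mul
    · exact B.continuous_mul.comp ((lift hT).continuous.prodMap (lift hT).continuous)
    · exact (lift_term hT (mul u v)).trans (by rw [lift_term, lift_term]; rfl)
  · refine denseRange_term.induction_on₂ (isClosed_eq ?_ ?_) fun u v => ?_
    · exact (lift hT).continuous.comp continuous_sup
    · exact continuous_sup.comp ((lift hT).continuous.prodMap (lift hT).continuous)
    · exact (lift_term hT (sup u v)).trans (by rw [lift_term, lift_term]; rfl)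

theorem norm_lift : ‖lift hT‖ = ‖T‖ := by
  refine le_antisymm ?_ (T.opNorm_le_bound (norm_nonneg _) fun x => ?_)
  · refine (ContinuousLinearMap.opNorm_extend_le (N := 1) _ denseRange_termInclusion
      fun d => (one_mul _).ge).trans ?_
    rw [NNReal.coe_one, one_mul]
    exact LinearMap.mkContinuous_norm_le _ (norm_nonneg T) _
  · rw [← lift_η hT, ← (η E).norm_map x]
    exact (lift hT).le_opNorm _

end Lift

theorem ext_of_comp_η {B : BanachFAlg} {Ψ₁ Ψ₂ : (alg E).carrier →L[ℝ] B.carrier}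
    (h₁ : IsLatAlgHom (alg E) B Ψ₁) (h₂ : IsLatAlgHom (alg E) B Ψ₂)
    (h : ∀ x, Ψ₁ (η E x) = Ψ₂ (η E x)) : Ψ₁ = Ψ₂ := by
  refine ContinuousLinearMap.ext fun a =>
    denseRange_term.induction_on a (isClosed_eq Ψ₁.continuous Ψ₂.continuous) fun w => ?_
  exact (map_eval h₁ (T' := Ψ₁.comp (η E).toContinuousLinearMap) (fun _ => rfl) w).trans
    (map_eval h₂ (fun x => (h x).symm) w).symm

variable (E) in
theorem isFreeBanachFAlg : IsFreeBanachFAlg E (alg E) (η E) := fun _ _ hT =>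
  ⟨lift hT, ⟨isLatAlgHom_lift hT, lift_η hT, norm_lift hT⟩, fun _ ⟨hΨ, hΨη, _⟩ =>
    ext_of_comp_η hΨ (isLatAlgHom_lift hT) fun x => (hΨη x).trans (lift_η hT x).symm⟩

end FreeBanachFAlg

theorem stmt1_general (E : Type) [NormedAddCommGroup E] [NormedSpace ℝ E] :
    ∃ (A : BanachFAlg) (η : E →ₗᵢ[ℝ] A.carrier), IsFreeBanachFAlg E A η :=
  ⟨_, _, FreeBanachFAlg.isFreeBanachFAlg E⟩

theorem stmt1 (E : Type) [NormedAddCommGroup E] [NormedSpace ℝ E] [CompleteSpace E] :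
    ∃ (A : BanachFAlg) (η : E →ₗᵢ[ℝ] A.carrier), IsFreeBanachFAlg E A η :=
  stmt1_general E
end

section
/- Let E be a real Banach space with continuous dual E*, and let V be the smallest subset of the space ℝ^(E*) of all functions E* → ℝ (with pointwise operations, order, and product) containing the evaluation maps δ_x(x*) = x*(x) for x ∈ E that is a linear subspace closed under pointwise products and pointwise binary suprema. Let 𝒩 be the set of all seminorms ν on V satisfying: |f| ≤ |g| pointwise implies ν(f) ≤ ν(g); ν(f·g) ≤ ν(f)·ν(g); and ν(δ_x) ≤ ‖x‖ for all x ∈ E. Then for every f ∈ V the quantity ρ(f) = sup{ν(f) : ν ∈ 𝒩} is finite, and ρ(f) = 0 if and only if f(x*) = 0 for every x* ∈ E* with ‖x*‖ ≤ 1. -/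
/-- A subset of the function space `W → ℝ` (with pointwise operations, order and
product) which is a linear subspace closed under pointwise products and pointwise
binary suprema. -/
def IsSublatticeSubalgebra {W : Type} (S : Set (W → ℝ)) : Prop :=
  (0 : W → ℝ) ∈ S ∧
  (∀ f g, f ∈ S → g ∈ S → f + g ∈ S) ∧
  (∀ (c : ℝ) (f), f ∈ S → c • f ∈ S) ∧
  (∀ f g, f ∈ S → g ∈ S → f * g ∈ S) ∧
  (∀ f g, f ∈ S → g ∈ S → f ⊔ g ∈ S)

/-- The smallest sublattice-subalgebra of `W → ℝ` containing `G`. -/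
def latAlgGen {W : Type} (G : Set (W → ℝ)) : Set (W → ℝ) :=
  ⋂₀ {S | IsSublatticeSubalgebra S ∧ G ⊆ S}

/-- The evaluation map `δ_x : E* → ℝ`, `δ_x x* = x* x`. -/
def evalMapD (E : Type) [NormedAddCommGroup E] [NormedSpace ℝ E] (x : E) :
    (E →L[ℝ] ℝ) → ℝ :=
  fun φ => φ x

/-- The sublattice-subalgebra of `ℝ^(E*)` generated by the evaluation maps. -/
def freeVLA (E : Type) [NormedAddCommGroup E] [NormedSpace ℝ E] :
    Set ((E →L[ℝ] ℝ) → ℝ) :=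
  latAlgGen (Set.range (evalMapD E))

/-- The seminorms on `V = freeVLA E` considered in the construction of the free
normed f-algebra: lattice seminorms which are submultiplicative and satisfy
`ν (δ_x) ≤ ‖x‖`. -/
def IsGoodSeminorm (E : Type) [NormedAddCommGroup E] [NormedSpace ℝ E]
    (ν : {f : (E →L[ℝ] ℝ) → ℝ // f ∈ freeVLA E} → ℝ) : Prop :=
  (∀ f, 0 ≤ ν f) ∧
  -- subadditivity
  (∀ (f g : (E →L[ℝ] ℝ) → ℝ) (hf : f ∈ freeVLA E) (hg : g ∈ freeVLA E)
      (hfg : f + g ∈ freeVLA E), ν ⟨f + g, hfg⟩ ≤ ν ⟨f, hf⟩ + ν ⟨g, hg⟩) ∧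
  -- absolute homogeneity
  (∀ (c : ℝ) (f : (E →L[ℝ] ℝ) → ℝ) (hf : f ∈ freeVLA E)
      (hcf : c • f ∈ freeVLA E), ν ⟨c • f, hcf⟩ = |c| * ν ⟨f, hf⟩) ∧
  -- lattice seminorm: `|f| ≤ |g|` pointwise implies `ν f ≤ ν g`
  (∀ (f g : {f : (E →L[ℝ] ℝ) → ℝ // f ∈ freeVLA E}),
      (∀ φ, |f.1 φ| ≤ |g.1 φ|) → ν f ≤ ν g) ∧
  -- submultiplicativity
  (∀ (f g : (E →L[ℝ] ℝ) → ℝ) (hf : f ∈ freeVLA E) (hg : g ∈ freeVLA E)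
      (hfg : f * g ∈ freeVLA E), ν ⟨f * g, hfg⟩ ≤ ν ⟨f, hf⟩ * ν ⟨g, hg⟩) ∧
  -- `ν (δ_x) ≤ ‖x‖`
  (∀ (x : E) (hx : evalMapD E x ∈ freeVLA E), ν ⟨evalMapD E x, hx⟩ ≤ ‖x‖)

/-!
Each `ν ∈ 𝒩` is bounded on a given `f ∈ V` by a constant depending only on `f`, by induction
along the generation of `V`. The supremum of `|f|` over the dual unit ball is itself in `𝒩`, so
`ρ f = 0` forces `f` to vanish there.

Conversely, let `f` vanish on the dual unit ball. Then `f x*` is a continuous function of the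
restriction of `x*` to a finite-dimensional subspace `M`, so for `ε > 0` there is `s > 1` with
`|f| ≤ ε ‖x*|_M‖` wherever `‖x*|_M‖ ≤ s`. Where `‖x*|_M‖ > s`, some `|δ_y|`, with `y` from a finite
almost norming subset of the unit ball of `M`, exceeds a fixed `ρ > 1`, and submultiplicativity
makes `ν` blind to functions `g` living there: `|g| ≤ ρ⁻ᴷ |g| ∑ |δ_y|ᴷ` gives
`ν g ≤ ρ⁻ᴷ #S ν g` for every `K`. Hence `ν f ≤ ε C` for all `ε > 0`.
-/

namespace IsSublatticeSubalgebra

variable {W : Type} {S : Set (W → ℝ)} (hS : IsSublatticeSubalgebra S)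
include hS

theorem zero_mem : (0 : W → ℝ) ∈ S := hS.1

theorem add_mem {f g : W → ℝ} (hf : f ∈ S) (hg : g ∈ S) : f + g ∈ S := hS.2.1 f g hf hg

theorem smul_mem (c : ℝ) {f : W → ℝ} (hf : f ∈ S) : c • f ∈ S := hS.2.2.1 c f hf

theorem mul_mem {f g : W → ℝ} (hf : f ∈ S) (hg : g ∈ S) : f * g ∈ S := hS.2.2.2.1 f g hf hg

theorem sup_mem {f g : W → ℝ} (hf : f ∈ S) (hg : g ∈ S) : f ⊔ g ∈ S := hS.2.2.2.2 f g hf hg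

theorem neg_mem {f : W → ℝ} (hf : f ∈ S) : -f ∈ S := by
  simpa using hS.smul_mem (-1) hf

theorem sub_mem {f g : W → ℝ} (hf : f ∈ S) (hg : g ∈ S) : f - g ∈ S := by
  simpa [sub_eq_add_neg] using hS.add_mem hf (hS.neg_mem hg)

theorem abs_mem {f : W → ℝ} (hf : f ∈ S) : |f| ∈ S := hS.sup_mem hf (hS.neg_mem hf)

theorem pow_mem {f : W → ℝ} (hf : f ∈ S) {k : ℕ} (hk : k ≠ 0) : f ^ k ∈ S := by
  induction k with
  | zero => exact absurd rfl hk
  | succ k ih =>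
    rcases eq_or_ne k 0 with rfl | hk
    · simpa using hf
    · simpa [pow_succ] using hS.mul_mem (ih hk) hf

theorem sum_mem {ι : Type*} (s : Finset ι) {f : ι → W → ℝ} (hf : ∀ i ∈ s, f i ∈ S) :
    ∑ i ∈ s, f i ∈ S := by
  classical
  induction s using Finset.induction_on with
  | empty => simpa using hS.zero_mem
  | insert i s hi ih =>
    rw [Finset.sum_insert hi]
    exact hS.add_mem (hf i (Finset.mem_insert_self i s))
      (ih fun j hj => hf j (Finset.mem_insert_of_mem hj))

end IsSublatticeSubalgebra

section latAlgGen

variable {W : Type} {G : Set (W → ℝ)}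

theorem isSublatticeSubalgebra_latAlgGen (G : Set (W → ℝ)) :
    IsSublatticeSubalgebra (latAlgGen G) :=
  ⟨fun _ hS => hS.1.zero_mem,
    fun _ _ hf hg S hS => hS.1.add_mem (hf S hS) (hg S hS),
    fun c _ hf S hS => hS.1.smul_mem c (hf S hS),
    fun _ _ hf hg S hS => hS.1.mul_mem (hf S hS) (hg S hS),
    fun _ _ hf hg S hS => hS.1.sup_mem (hf S hS) (hg S hS)⟩

theorem subset_latAlgGen (G : Set (W → ℝ)) : G ⊆ latAlgGen G :=
  fun _ hf _ hS => hS.2 hf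

theorem latAlgGen_subset {S : Set (W → ℝ)} (hS : IsSublatticeSubalgebra S) (hGS : G ⊆ S) :
    latAlgGen G ⊆ S :=
  fun _ hf => hf S ⟨hS, hGS⟩

@[elab_as_elim]
theorem latAlgGen_induction {p : (f : W → ℝ) → f ∈ latAlgGen G → Prop}
    (mem : ∀ f (hf : f ∈ G), p f (subset_latAlgGen G hf))
    (zero : p 0 (isSublatticeSubalgebra_latAlgGen G).zero_mem)
    (add : ∀ f g hf hg, p f hf → p g hg →
      p (f + g) ((isSublatticeSubalgebra_latAlgGen G).add_mem hf hg))
    (smul : ∀ (c : ℝ) f hf, p f hf → p (c • f) ((isSublatticeSubalgebra_latAlgGen G).smul_mem c hf))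
    (mul : ∀ f g hf hg, p f hf → p g hg →
      p (f * g) ((isSublatticeSubalgebra_latAlgGen G).mul_mem hf hg))
    (sup : ∀ f g hf hg, p f hf → p g hg →
      p (f ⊔ g) ((isSublatticeSubalgebra_latAlgGen G).sup_mem hf hg))
    {f : W → ℝ} (hf : f ∈ latAlgGen G) : p f hf := by
  have hS : IsSublatticeSubalgebra {f | ∃ hf, p f hf} :=
    ⟨⟨_, zero⟩, fun f g ⟨hf, pf⟩ ⟨hg, pg⟩ => ⟨_, add f g hf hg pf pg⟩,
      fun c f ⟨hf, pf⟩ => ⟨_, smul c f hf pf⟩,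
      fun f g ⟨hf, pf⟩ ⟨hg, pg⟩ => ⟨_, mul f g hf hg pf pg⟩,
      fun f g ⟨hf, pf⟩ ⟨hg, pg⟩ => ⟨_, sup f g hf hg pf pg⟩⟩
  obtain ⟨_, hpf⟩ := latAlgGen_subset hS (fun f hf => ⟨_, mem f hf⟩) hf
  exact hpf

theorem continuous_of_mem_latAlgGen [TopologicalSpace W] (hG : ∀ g ∈ G, Continuous g)
    {f : W → ℝ} (hf : f ∈ latAlgGen G) : Continuous f := by
  induction hf using latAlgGen_induction with
  | mem g hg => exact hG g hg
  | zero => exact continuous_const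
  | add _ _ _ _ hf hg => exact hf.add hg
  | smul c _ _ hf => exact hf.const_smul c
  | mul _ _ _ _ hf hg => exact hf.mul hg
  | sup _ _ _ _ hf hg => exact hf.sup hg

theorem exists_abs_le_of_mem_latAlgGen (s : Set W) (hG : ∀ g ∈ G, ∃ C, ∀ w ∈ s, |g w| ≤ C)
    {f : W → ℝ} (hf : f ∈ latAlgGen G) : ∃ C, ∀ w ∈ s, |f w| ≤ C := by
  induction hf using latAlgGen_induction with
  | mem g hg => exact hG g hg
  | zero => exact ⟨0, fun w _ => by simp⟩
  | add f g _ _ hf hg =>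
    obtain ⟨C, hC⟩ := hf
    obtain ⟨D, hD⟩ := hg
    exact ⟨C + D, fun w hw => (abs_add_le _ _).trans (add_le_add (hC w hw) (hD w hw))⟩
  | smul c f _ hf =>
    obtain ⟨C, hC⟩ := hf
    exact ⟨|c| * C, fun w hw => by
      simpa [abs_mul] using mul_le_mul_of_nonneg_left (hC w hw) (abs_nonneg c)⟩
  | mul f g _ _ hf hg =>
    obtain ⟨C, hC⟩ := hf
    obtain ⟨D, hD⟩ := hg
    exact ⟨C * D, fun w hw => by
      simpa [abs_mul] using
        mul_le_mul (hC w hw) (hD w hw) (abs_nonneg _) ((abs_nonneg _).trans (hC w hw))⟩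
  | sup f g _ _ hf hg =>
    obtain ⟨C, hC⟩ := hf
    obtain ⟨D, hD⟩ := hg
    exact ⟨max C D, fun w hw =>
      abs_max_le_max_abs_abs.trans (max_le_max (hC w hw) (hD w hw))⟩

end latAlgGen

section analysis

theorem exists_finset_norming (X : Type*) [NormedAddCommGroup X] [NormedSpace ℝ X]
    [FiniteDimensional ℝ X] {c : ℝ} (hc : c < 1) :
    ∃ S : Finset X, (∀ y ∈ S, ‖y‖ ≤ 1) ∧ ∀ t : X →L[ℝ] ℝ, ∃ y ∈ S, c * ‖t‖ ≤ |t y| := by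
  classical
  have hcover : Metric.sphere (0 : X →L[ℝ] ℝ) 1 ⊆
      ⋃ y : Metric.closedBall (0 : X) 1, {t | c < |t y|} := by
    intro t ht
    obtain ⟨y, hy, hty⟩ := t.exists_lt_apply_of_lt_opNorm (r := c)
      (by rwa [mem_sphere_zero_iff_norm.1 ht])
    exact Set.mem_iUnion.2 ⟨⟨y, mem_closedBall_zero_iff.2 hy.le⟩, hty⟩
  obtain ⟨T, hT⟩ := (isCompact_sphere (0 : X →L[ℝ] ℝ) 1).elim_finite_subcover _
    (fun y => isOpen_lt continuous_const (by fun_prop)) hcover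
  refine ⟨insert 0 (T.image Subtype.val), ?_, fun t => ?_⟩
  · simp only [Finset.mem_insert, Finset.mem_image]
    rintro _ (rfl | ⟨y, -, rfl⟩)
    exacts [by simp, mem_closedBall_zero_iff.1 y.2]
  rcases eq_or_ne t 0 with rfl | ht
  · exact ⟨0, by simp, by simp⟩
  have htn : 0 < ‖t‖ := norm_pos_iff.2 ht
  obtain ⟨y, hyT, hy⟩ := Set.mem_iUnion₂.1
    (hT (mem_sphere_zero_iff_norm.2 (norm_smul_inv_norm (𝕜 := ℝ) ht)))
  refine ⟨y, Finset.mem_insert_of_mem (Finset.mem_image_of_mem _ hyT), ?_⟩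
  have : c < ‖t‖⁻¹ * |t y| := by simpa [abs_mul, abs_of_pos htn] using hy
  rw [lt_inv_mul_iff₀ htn, mul_comm] at this
  exact this.le

theorem Submodule.exists_finset_norming_comp_subtypeL {E : Type*} [NormedAddCommGroup E]
    [NormedSpace ℝ E] (M : Submodule ℝ E) [FiniteDimensional ℝ M] {c : ℝ} (hc : c < 1) :
    ∃ S : Finset E, (∀ y ∈ S, ‖y‖ ≤ 1) ∧
      ∀ φ : E →L[ℝ] ℝ, ∃ y ∈ S, c * ‖φ.comp M.subtypeL‖ ≤ |φ y| := by
  classical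
  obtain ⟨S, hS, hSt⟩ := exists_finset_norming M hc
  refine ⟨S.image Subtype.val, by simpa using hS, fun φ => ?_⟩
  obtain ⟨y, hy, hφy⟩ := hSt (φ.comp M.subtypeL)
  exact ⟨y, Finset.mem_image_of_mem _ hy, hφy⟩

theorem exists_one_lt_forall_abs_le_mul_norm {X : Type*} [NormedAddCommGroup X]
    [NormedSpace ℝ X] [ProperSpace X] {F : X → ℝ} (hF : Continuous F)
    (hF0 : ∀ t, ‖t‖ ≤ 1 → F t = 0) {ε : ℝ} (hε : 0 < ε) :
    ∃ s, 1 < s ∧ ∀ t, ‖t‖ ≤ s → |F t| ≤ ε * ‖t‖ := by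
  obtain ⟨r, hr, hsub⟩ := (isCompact_closedBall (0 : X) 1).exists_cthickening_subset_open
    (isOpen_lt hF.abs continuous_const) fun t ht =>
      show |F t| < ε by rwa [hF0 t (mem_closedBall_zero_iff.1 ht), abs_zero]
  rw [cthickening_closedBall hr.le zero_le_one] at hsub
  refine ⟨r + 1, by linarith, fun t ht => ?_⟩
  rcases le_or_gt ‖t‖ 1 with h1 | h1
  · rw [hF0 t h1, abs_zero]
    positivity
  · exact (hsub (mem_closedBall_zero_iff.2 ht)).le.trans (le_mul_of_one_le_right hε.le h1.le)

end analysis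

section freeVLA

variable {E : Type} [NormedAddCommGroup E] [NormedSpace ℝ E]

theorem isSublatticeSubalgebra_freeVLA : IsSublatticeSubalgebra (freeVLA E) :=
  isSublatticeSubalgebra_latAlgGen _

theorem evalMapD_mem_freeVLA (x : E) : evalMapD E x ∈ freeVLA E :=
  subset_latAlgGen _ ⟨x, rfl⟩

theorem continuous_of_mem_freeVLA {f : (E →L[ℝ] ℝ) → ℝ} (hf : f ∈ freeVLA E) : Continuous f :=
  continuous_of_mem_latAlgGen
    (by rintro _ ⟨x, rfl⟩; exact (ContinuousLinearMap.apply ℝ ℝ x).continuous) hf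

theorem abs_evalMapD_le (x : E) {φ : E →L[ℝ] ℝ} (hφ : ‖φ‖ ≤ 1) : |evalMapD E x φ| ≤ ‖x‖ :=
  calc |φ x| = ‖φ x‖ := (Real.norm_eq_abs _).symm
    _ ≤ ‖φ‖ * ‖x‖ := φ.le_opNorm x
    _ ≤ ‖x‖ := mul_le_of_le_one_left (norm_nonneg x) hφ

theorem exists_abs_le_of_mem_freeVLA {f : (E →L[ℝ] ℝ) → ℝ} (hf : f ∈ freeVLA E) :
    ∃ C, ∀ φ : E →L[ℝ] ℝ, ‖φ‖ ≤ 1 → |f φ| ≤ C := by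
  refine exists_abs_le_of_mem_latAlgGen {φ | ‖φ‖ ≤ 1} ?_ hf
  rintro _ ⟨x, rfl⟩
  exact ⟨‖x‖, fun φ hφ => abs_evalMapD_le x hφ⟩

theorem exists_finset_forall_eqOn_imp_eq {f : (E →L[ℝ] ℝ) → ℝ} (hf : f ∈ freeVLA E) :
    ∃ A : Finset E, ∀ φ ψ : E →L[ℝ] ℝ, Set.EqOn φ ψ A → f φ = f ψ := by
  classical
  have union {f g : (E →L[ℝ] ℝ) → ℝ} (op : ℝ → ℝ → ℝ)
      (hf : ∃ A : Finset E, ∀ φ ψ : E →L[ℝ] ℝ, Set.EqOn φ ψ A → f φ = f ψ)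
      (hg : ∃ A : Finset E, ∀ φ ψ : E →L[ℝ] ℝ, Set.EqOn φ ψ A → g φ = g ψ) :
      ∃ A : Finset E, ∀ φ ψ : E →L[ℝ] ℝ, Set.EqOn φ ψ A → op (f φ) (g φ) = op (f ψ) (g ψ) := by
    obtain ⟨A, hA⟩ := hf
    obtain ⟨B, hB⟩ := hg
    refine ⟨A ∪ B, fun φ ψ h => ?_⟩
    rw [hA φ ψ (h.mono (by simp)), hB φ ψ (h.mono (by simp))]
  induction hf using latAlgGen_induction with
  | mem g hg =>
    obtain ⟨x, rfl⟩ := hg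
    exact ⟨{x}, fun φ ψ h => h (by simp)⟩
  | zero => exact ⟨∅, fun _ _ _ => rfl⟩
  | add _ _ _ _ hf hg => exact union (· + ·) hf hg
  | smul c _ _ hf =>
    obtain ⟨A, hA⟩ := hf
    exact ⟨A, fun φ ψ h => by simp only [Pi.smul_apply, hA φ ψ h]⟩
  | mul _ _ _ _ hf hg => exact union (· * ·) hf hg
  | sup _ _ _ _ hf hg => exact union max hf hg

theorem exists_finiteDimensional_factorization {f : (E →L[ℝ] ℝ) → ℝ} (hf : f ∈ freeVLA E) :
    ∃ (M : Submodule ℝ E) (_ : FiniteDimensional ℝ M) (F : (M →L[ℝ] ℝ) → ℝ),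
      Continuous F ∧ ∀ φ : E →L[ℝ] ℝ, f φ = F (φ.comp M.subtypeL) := by
  obtain ⟨A, hA⟩ := exists_finset_forall_eqOn_imp_eq hf
  obtain ⟨P, hP⟩ := Submodule.ClosedComplemented.of_finiteDimensional (Submodule.span ℝ (A : Set E))
  refine ⟨_, inferInstance, fun t => f (t.comp P),
    (continuous_of_mem_freeVLA hf).comp (by fun_prop), fun φ => hA _ _ fun x hx => ?_⟩
  simp [hP ⟨x, Submodule.subset_span hx⟩]

end freeVLA

section goodSeminorm

variable {E : Type} [NormedAddCommGroup E] [NormedSpace ℝ E]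

local notation "hV" => (isSublatticeSubalgebra_freeVLA (E := E))

def evalPowSum (S : Finset E) (k : ℕ) : (E →L[ℝ] ℝ) → ℝ :=
  ∑ y ∈ S, |evalMapD E y| ^ k

theorem evalPowSum_apply (S : Finset E) (k : ℕ) (φ : E →L[ℝ] ℝ) :
    evalPowSum S k φ = ∑ y ∈ S, |φ y| ^ k := by
  simp [evalPowSum, evalMapD]

theorem evalPowSum_mem (S : Finset E) {k : ℕ} (hk : k ≠ 0) : evalPowSum S k ∈ freeVLA E :=
  (hV).sum_mem S fun y _ => (hV).pow_mem ((hV).abs_mem (evalMapD_mem_freeVLA y)) hk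

namespace IsGoodSeminorm

variable {ν : {f : (E →L[ℝ] ℝ) → ℝ // f ∈ freeVLA E} → ℝ} (hν : IsGoodSeminorm E ν)
include hν

theorem nonneg (f : {f : (E →L[ℝ] ℝ) → ℝ // f ∈ freeVLA E}) : 0 ≤ ν f := hν.1 f

theorem add_le {f g : (E →L[ℝ] ℝ) → ℝ} (hf : f ∈ freeVLA E) (hg : g ∈ freeVLA E) :
    ν ⟨f + g, (hV).add_mem hf hg⟩ ≤ ν ⟨f, hf⟩ + ν ⟨g, hg⟩ :=
  hν.2.1 f g hf hg _

theorem smul_eq (c : ℝ) {f : (E →L[ℝ] ℝ) → ℝ} (hf : f ∈ freeVLA E) :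
    ν ⟨c • f, (hV).smul_mem c hf⟩ = |c| * ν ⟨f, hf⟩ :=
  hν.2.2.1 c f hf _

theorem mono {f g : {f : (E →L[ℝ] ℝ) → ℝ // f ∈ freeVLA E}} (h : ∀ φ, |f.1 φ| ≤ |g.1 φ|) :
    ν f ≤ ν g :=
  hν.2.2.2.1 f g h

theorem mul_le {f g : (E →L[ℝ] ℝ) → ℝ} (hf : f ∈ freeVLA E) (hg : g ∈ freeVLA E) :
    ν ⟨f * g, (hV).mul_mem hf hg⟩ ≤ ν ⟨f, hf⟩ * ν ⟨g, hg⟩ :=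
  hν.2.2.2.2.1 f g hf hg _

theorem eval_le (x : E) : ν ⟨evalMapD E x, evalMapD_mem_freeVLA x⟩ ≤ ‖x‖ :=
  hν.2.2.2.2.2 x _

theorem map_zero : ν ⟨0, (hV).zero_mem⟩ = 0 := by
  simpa using hν.smul_eq 0 (hV).zero_mem

theorem map_abs {f : (E →L[ℝ] ℝ) → ℝ} (hf : f ∈ freeVLA E) :
    ν ⟨|f|, (hV).abs_mem hf⟩ = ν ⟨f, hf⟩ :=
  le_antisymm (hν.mono fun φ => by simp) (hν.mono fun φ => by simp)

theorem pow_abs_eval_le (y : E) {k : ℕ} (hk : k ≠ 0) :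
    ν ⟨|evalMapD E y| ^ k, (hV).pow_mem ((hV).abs_mem (evalMapD_mem_freeVLA y)) hk⟩ ≤ ‖y‖ ^ k := by
  have hy := (hV).abs_mem (evalMapD_mem_freeVLA y)
  induction k with
  | zero => exact absurd rfl hk
  | succ k ih =>
    rcases eq_or_ne k 0 with rfl | hk
    · simpa using (hν.map_abs (evalMapD_mem_freeVLA y)).trans_le (hν.eval_le y)
    · calc ν ⟨_, _⟩
            = ν ⟨|evalMapD E y| ^ k * |evalMapD E y|, (hV).mul_mem ((hV).pow_mem hy hk) hy⟩ :=
            congr_arg ν (Subtype.ext (pow_succ _ _))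
        _ ≤ ν ⟨_, (hV).pow_mem hy hk⟩ * ν ⟨_, hy⟩ := hν.mul_le _ _
        _ ≤ ‖y‖ ^ k * ‖y‖ :=
            mul_le_mul (ih hk) ((hν.map_abs _).trans_le (hν.eval_le y)) (hν.nonneg _)
              (pow_nonneg (norm_nonneg y) k)
        _ = ‖y‖ ^ (k + 1) := (pow_succ _ _).symm

theorem evalPowSum_le_card {S : Finset E} (hS : ∀ y ∈ S, ‖y‖ ≤ 1) {k : ℕ} (hk : k ≠ 0) :
    ν ⟨evalPowSum S k, evalPowSum_mem S hk⟩ ≤ S.card := by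
  classical
  induction S using Finset.induction_on with
  | empty => simpa [evalPowSum] using hν.map_zero.le
  | insert y S hy ih =>
    have hyS := (hV).pow_mem ((hV).abs_mem (evalMapD_mem_freeVLA y)) hk
    calc ν ⟨_, _⟩
          = ν ⟨|evalMapD E y| ^ k + evalPowSum S k, (hV).add_mem hyS (evalPowSum_mem S hk)⟩ :=
          congr_arg ν (Subtype.ext (Finset.sum_insert hy))
      _ ≤ ν ⟨_, hyS⟩ + ν ⟨_, evalPowSum_mem S hk⟩ := hν.add_le _ _
      _ ≤ 1 + S.card := add_le_add
          ((hν.pow_abs_eval_le y hk).trans (pow_le_one₀ (norm_nonneg y) (hS y (by simp))))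
          (ih fun z hz => hS z (by simp [hz]))
      _ = (insert y S).card := by rw [Finset.card_insert_of_notMem hy]; push_cast; ring

theorem eq_zero_of_abs_le_mul {f g : (E →L[ℝ] ℝ) → ℝ} (hf : f ∈ freeVLA E) (hg : g ∈ freeVLA E)
    {c : ℝ} (hc : 0 ≤ c) (h : ∀ φ, |f φ| ≤ c * |f φ * g φ|) (hcg : c * ν ⟨g, hg⟩ < 1) :
    ν ⟨f, hf⟩ = 0 := by
  have hfg := (hV).mul_mem hf hg
  have hle : ν ⟨f, hf⟩ ≤ c * ν ⟨g, hg⟩ * ν ⟨f, hf⟩ :=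
    calc ν ⟨f, hf⟩ ≤ ν ⟨c • (f * g), (hV).smul_mem c hfg⟩ :=
          hν.mono fun φ => by simpa [abs_mul, abs_of_nonneg hc] using h φ
      _ = c * ν ⟨f * g, hfg⟩ := by rw [hν.smul_eq, abs_of_nonneg hc]
      _ ≤ c * (ν ⟨f, hf⟩ * ν ⟨g, hg⟩) := mul_le_mul_of_nonneg_left (hν.mul_le hf hg) hc
      _ = c * ν ⟨g, hg⟩ * ν ⟨f, hf⟩ := by ring
  nlinarith [hν.nonneg ⟨f, hf⟩]

theorem eq_zero_of_forall_ne_zero_exists_le_abs {f : (E →L[ℝ] ℝ) → ℝ} (hf : f ∈ freeVLA E)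
    {S : Finset E} (hS : ∀ y ∈ S, ‖y‖ ≤ 1) {ρ : ℝ} (hρ : 1 < ρ)
    (h : ∀ φ, f φ ≠ 0 → ∃ y ∈ S, ρ ≤ |φ y|) : ν ⟨f, hf⟩ = 0 := by
  obtain ⟨n, hn⟩ := pow_unbounded_of_one_lt (S.card : ℝ) hρ
  have hK : (S.card : ℝ) < ρ ^ (n + 1) := hn.trans_le (pow_le_pow_right₀ hρ.le n.le_succ)
  have hρK : 0 < ρ ^ (n + 1) := pow_pos (zero_lt_one.trans hρ) _
  refine hν.eq_zero_of_abs_le_mul hf (evalPowSum_mem S n.succ_ne_zero) (inv_nonneg.2 hρK.le)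
    (fun φ => ?_) ?_
  · rcases eq_or_ne (f φ) 0 with hφ | hφ
    · simp [hφ]
    obtain ⟨y, hy, hρy⟩ := h φ hφ
    have hR : ρ ^ (n + 1) ≤ evalPowSum S (n + 1) φ := by
      rw [evalPowSum_apply]
      exact (pow_le_pow_left₀ (zero_le_one.trans hρ.le) hρy _).trans
        (Finset.single_le_sum (fun z _ => pow_nonneg (abs_nonneg (φ z)) _) hy)
    rw [abs_mul, abs_of_nonneg (hρK.le.trans hR), le_inv_mul_iff₀ hρK, mul_comm |f φ|]
    exact mul_le_mul_of_nonneg_right hR (abs_nonneg _)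
  · rw [inv_mul_lt_iff₀ hρK, mul_one]
    exact (hν.evalPowSum_le_card hS n.succ_ne_zero).trans_lt hK

theorem le_of_forall_abs_le_or_exists_le_abs {f g : (E →L[ℝ] ℝ) → ℝ} (hf : f ∈ freeVLA E)
    (hg : g ∈ freeVLA E) {S : Finset E} (hS : ∀ y ∈ S, ‖y‖ ≤ 1) {ρ : ℝ} (hρ : 1 < ρ)
    (h : ∀ φ, |f φ| ≤ g φ ∨ ∃ y ∈ S, ρ ≤ |φ y|) : ν ⟨f, hf⟩ ≤ ν ⟨g, hg⟩ := by
  set e := (|f| - g) ⊔ 0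
  have he : e ∈ freeVLA E := (hV).sup_mem ((hV).sub_mem ((hV).abs_mem hf) hg) (hV).zero_mem
  have he0 : ν ⟨e, he⟩ = 0 := hν.eq_zero_of_forall_ne_zero_exists_le_abs he hS hρ fun φ hφ =>
    (h φ).resolve_left fun hφg => hφ (by simpa [e] using hφg)
  calc ν ⟨f, hf⟩ ≤ ν ⟨e + g, (hV).add_mem he hg⟩ := hν.mono fun φ => by
        have : |f φ| - g φ ≤ e φ := by simp [e]
        exact (le_abs_self _).trans' (by simpa using sub_le_iff_le_add.1 this)
    _ ≤ ν ⟨e, he⟩ + ν ⟨g, hg⟩ := hν.add_le he hg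
    _ = ν ⟨g, hg⟩ := by rw [he0, zero_add]

theorem le_of_forall_norm_comp_subtypeL_le {f g : (E →L[ℝ] ℝ) → ℝ} (hf : f ∈ freeVLA E)
    (hg : g ∈ freeVLA E) (M : Submodule ℝ E) [FiniteDimensional ℝ M] {s : ℝ} (hs : 1 < s)
    (h : ∀ φ : E →L[ℝ] ℝ, ‖φ.comp M.subtypeL‖ ≤ s → |f φ| ≤ g φ) : ν ⟨f, hf⟩ ≤ ν ⟨g, hg⟩ := by
  have hs0 : 0 < s + 1 := by linarith
  obtain ⟨S, hS, hSφ⟩ := M.exists_finset_norming_comp_subtypeL (c := 2 / (s + 1))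
    (by rw [div_lt_one hs0]; linarith)
  refine hν.le_of_forall_abs_le_or_exists_le_abs hf hg hS (ρ := 2 / (s + 1) * s)
    (by rw [div_mul_eq_mul_div, one_lt_div hs0]; linarith) fun φ => ?_
  rcases le_or_gt ‖φ.comp M.subtypeL‖ s with hφ | hφ
  · exact .inl (h φ hφ)
  · obtain ⟨y, hy, hφy⟩ := hSφ φ
    exact .inr ⟨y, hy, (mul_le_mul_of_nonneg_left hφ.le (by positivity)).trans hφy⟩

theorem eq_zero_of_forall_norm_le_one (f : {f : (E →L[ℝ] ℝ) → ℝ // f ∈ freeVLA E})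
    (hf0 : ∀ φ : E →L[ℝ] ℝ, ‖φ‖ ≤ 1 → f.1 φ = 0) : ν f = 0 := by
  obtain ⟨M, _, F, hF, hfF⟩ := exists_finiteDimensional_factorization f.2
  have hF0 : ∀ t : M →L[ℝ] ℝ, ‖t‖ ≤ 1 → F t = 0 := by
    intro t ht
    obtain ⟨φ, hφt, hφ⟩ := exists_extension_norm_eq M t
    rw [show t = φ.comp M.subtypeL from (ContinuousLinearMap.ext hφt).symm, ← hfF]
    exact hf0 φ (hφ.trans_le ht)
  obtain ⟨S₀, hS₀, hS₀φ⟩ := M.exists_finset_norming_comp_subtypeL (c := 1 / 2) (by norm_num)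
  have hp := evalPowSum_mem S₀ one_ne_zero
  have hbound : ∀ ε > 0, ν f ≤ ε * ν ⟨evalPowSum S₀ 1, hp⟩ := by
    intro ε hε
    obtain ⟨s, hs, hFs⟩ :=
      exists_one_lt_forall_abs_le_mul_norm (X := M →L[ℝ] ℝ) hF hF0 (half_pos hε)
    calc ν f ≤ ν ⟨ε • evalPowSum S₀ 1, (hV).smul_mem ε hp⟩ :=
          hν.le_of_forall_norm_comp_subtypeL_le f.2 _ M hs fun φ hφ => ?_
      _ = ε * ν ⟨_, hp⟩ := by rw [hν.smul_eq, abs_of_pos hε]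
    obtain ⟨y, hy, hφy⟩ := hS₀φ φ
    calc |f.1 φ| ≤ ε / 2 * ‖φ.comp M.subtypeL‖ := hfF φ ▸ hFs _ hφ
      _ ≤ ε * |φ y| := by nlinarith
      _ ≤ ε * evalPowSum S₀ 1 φ := by
          have := Finset.single_le_sum (fun z _ => abs_nonneg (φ z)) hy
          rw [evalPowSum_apply]
          exact mul_le_mul_of_nonneg_left (by simpa using this) hε.le
  have hlim : Filter.Tendsto (fun ε => ε * ν ⟨evalPowSum S₀ 1, hp⟩)
      (nhdsWithin (0 : ℝ) (Set.Ioi 0)) (nhds 0) :=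
    ((continuous_mul_const _).tendsto' 0 0 (zero_mul _)).mono_left nhdsWithin_le_nhds
  exact le_antisymm (ge_of_tendsto hlim (eventually_nhdsWithin_of_forall hbound)) (hν.nonneg f)

end IsGoodSeminorm

theorem exists_forall_isGoodSeminorm_le {f : (E →L[ℝ] ℝ) → ℝ} (hf : f ∈ freeVLA E) :
    ∃ B, ∀ ν, IsGoodSeminorm E ν → ν ⟨f, hf⟩ ≤ B := by
  induction hf using latAlgGen_induction with
  | mem g hg =>
    obtain ⟨x, rfl⟩ := hg
    exact ⟨‖x‖, fun ν hν => hν.eval_le x⟩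
  | zero => exact ⟨0, fun ν hν => hν.map_zero.le⟩
  | add f g hf hg hBf hBg =>
    obtain ⟨B, hB⟩ := hBf
    obtain ⟨C, hC⟩ := hBg
    exact ⟨B + C, fun ν hν => (hν.add_le hf hg).trans (add_le_add (hB ν hν) (hC ν hν))⟩
  | smul c f hf hBf =>
    obtain ⟨B, hB⟩ := hBf
    exact ⟨|c| * B, fun ν hν =>
      (hν.smul_eq c hf).trans_le (mul_le_mul_of_nonneg_left (hB ν hν) (abs_nonneg c))⟩
  | mul f g hf hg hBf hBg =>
    obtain ⟨B, hB⟩ := hBf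
    obtain ⟨C, hC⟩ := hBg
    exact ⟨B * C, fun ν hν => (hν.mul_le hf hg).trans
      (mul_le_mul (hB ν hν) (hC ν hν) (hν.nonneg _) ((hν.nonneg _).trans (hB ν hν)))⟩
  | sup f g hf hg hBf hBg =>
    obtain ⟨B, hB⟩ := hBf
    obtain ⟨C, hC⟩ := hBg
    refine ⟨B + C, fun ν hν => ?_⟩
    calc ν ⟨f ⊔ g, _⟩ ≤ ν ⟨|f| + |g|, (hV).add_mem ((hV).abs_mem hf) ((hV).abs_mem hg)⟩ :=
          hν.mono fun φ => by
            simpa [abs_of_nonneg (add_nonneg (abs_nonneg (f φ)) (abs_nonneg (g φ)))] using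
              abs_max_le_max_abs_abs.trans (max_le_add_of_nonneg (abs_nonneg _) (abs_nonneg _))
      _ ≤ ν ⟨|f|, _⟩ + ν ⟨|g|, _⟩ := hν.add_le _ _
      _ ≤ B + C := by
          rw [hν.map_abs hf, hν.map_abs hg]
          exact add_le_add (hB ν hν) (hC ν hν)

end goodSeminorm

section unitBallSupNorm

variable {E : Type} [NormedAddCommGroup E] [NormedSpace ℝ E]

theorem isGoodSeminorm_zero : IsGoodSeminorm E fun _ => 0 :=
  ⟨fun _ => le_rfl, fun _ _ _ _ _ => by simp, fun _ _ _ _ => by simp, fun _ _ _ => le_rfl,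
    fun _ _ _ _ _ => by simp, fun x _ => norm_nonneg x⟩

noncomputable def unitBallSupNorm (f : {f : (E →L[ℝ] ℝ) → ℝ // f ∈ freeVLA E}) : ℝ :=
  ⨆ φ : Metric.closedBall (0 : E →L[ℝ] ℝ) 1, |f.1 φ|

theorem abs_le_unitBallSupNorm (f : {f : (E →L[ℝ] ℝ) → ℝ // f ∈ freeVLA E}) {φ : E →L[ℝ] ℝ}
    (hφ : ‖φ‖ ≤ 1) : |f.1 φ| ≤ unitBallSupNorm f := by
  obtain ⟨C, hC⟩ := exists_abs_le_of_mem_freeVLA f.2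
  refine le_ciSup (f := fun ψ : Metric.closedBall (0 : E →L[ℝ] ℝ) 1 => |f.1 ψ|) ⟨C, ?_⟩
    ⟨φ, mem_closedBall_zero_iff.2 hφ⟩
  rintro _ ⟨ψ, rfl⟩
  exact hC ψ (mem_closedBall_zero_iff.1 ψ.2)

theorem unitBallSupNorm_le (f : {f : (E →L[ℝ] ℝ) → ℝ // f ∈ freeVLA E}) {B : ℝ} (hB0 : 0 ≤ B)
    (hB : ∀ φ : E →L[ℝ] ℝ, ‖φ‖ ≤ 1 → |f.1 φ| ≤ B) : unitBallSupNorm f ≤ B :=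
  Real.iSup_le (fun φ => hB φ (mem_closedBall_zero_iff.1 φ.2)) hB0

theorem unitBallSupNorm_nonneg (f : {f : (E →L[ℝ] ℝ) → ℝ // f ∈ freeVLA E}) :
    0 ≤ unitBallSupNorm f :=
  Real.iSup_nonneg fun _ => abs_nonneg _

theorem isGoodSeminorm_unitBallSupNorm : IsGoodSeminorm E (unitBallSupNorm (E := E)) := by
  refine ⟨unitBallSupNorm_nonneg, fun f g hf hg _ => ?_, fun c f hf _ => ?_, fun f g h => ?_,
    fun f g hf hg _ => ?_, fun x _ => ?_⟩
  · exact unitBallSupNorm_le _ (add_nonneg (unitBallSupNorm_nonneg _) (unitBallSupNorm_nonneg _))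
      fun φ hφ => (abs_add_le _ _).trans (add_le_add (abs_le_unitBallSupNorm ⟨f, hf⟩ hφ)
        (abs_le_unitBallSupNorm ⟨g, hg⟩ hφ))
  · rw [unitBallSupNorm, unitBallSupNorm, Real.mul_iSup_of_nonneg (abs_nonneg c)]
    simp [abs_mul]
  · exact unitBallSupNorm_le _ (unitBallSupNorm_nonneg _) fun φ hφ =>
      (h φ).trans (abs_le_unitBallSupNorm g hφ)
  · exact unitBallSupNorm_le _ (mul_nonneg (unitBallSupNorm_nonneg _) (unitBallSupNorm_nonneg _))
      fun φ hφ => (abs_mul (f φ) (g φ)).trans_le (mul_le_mul (abs_le_unitBallSupNorm ⟨f, hf⟩ hφ)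
        (abs_le_unitBallSupNorm ⟨g, hg⟩ hφ) (abs_nonneg _) (unitBallSupNorm_nonneg _))
  · exact unitBallSupNorm_le _ (norm_nonneg x) fun φ hφ => abs_evalMapD_le x hφ

end unitBallSupNorm

theorem stmt3_general (E : Type) [NormedAddCommGroup E] [NormedSpace ℝ E]
    (f : {f : (E →L[ℝ] ℝ) → ℝ // f ∈ freeVLA E}) :
    BddAbove {r : ℝ | ∃ ν, IsGoodSeminorm E ν ∧ r = ν f} ∧
    (sSup {r : ℝ | ∃ ν, IsGoodSeminorm E ν ∧ r = ν f} = 0 ↔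
      ∀ φ : E →L[ℝ] ℝ, ‖φ‖ ≤ 1 → f.1 φ = 0) := by
  have hbdd : BddAbove {r : ℝ | ∃ ν, IsGoodSeminorm E ν ∧ r = ν f} := by
    obtain ⟨B, hB⟩ := exists_forall_isGoodSeminorm_le f.2
    exact ⟨B, by rintro _ ⟨ν, hν, rfl⟩; exact hB ν hν⟩
  refine ⟨hbdd, fun h φ hφ => ?_, fun h => ?_⟩
  · have hsup : unitBallSupNorm f ≤ 0 :=
      h ▸ le_csSup hbdd ⟨_, isGoodSeminorm_unitBallSupNorm, rfl⟩
    exact abs_nonpos_iff.1 ((abs_le_unitBallSupNorm f hφ).trans hsup)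
  · have hzero : {r : ℝ | ∃ ν, IsGoodSeminorm E ν ∧ r = ν f} = {0} :=
      Set.eq_singleton_iff_unique_mem.2 ⟨⟨_, isGoodSeminorm_zero, rfl⟩,
        fun _ ⟨ν, hν, hr⟩ => hr ▸ hν.eq_zero_of_forall_norm_le_one f h⟩
    rw [hzero, csSup_singleton]

theorem stmt3 (E : Type) [NormedAddCommGroup E] [NormedSpace ℝ E] [CompleteSpace E]
    (f : {f : (E →L[ℝ] ℝ) → ℝ // f ∈ freeVLA E}) :
    BddAbove {r : ℝ | ∃ ν, IsGoodSeminorm E ν ∧ r = ν f} ∧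
    (sSup {r : ℝ | ∃ ν, IsGoodSeminorm E ν ∧ r = ν f} = 0 ↔
      ∀ φ : E →L[ℝ] ℝ, ‖φ‖ ≤ 1 → f.1 φ = 0) :=
  stmt3_general E f
end

section
/- Let E be a real Banach space with continuous dual E*, and let V be the smallest subset of the space ℝ^(E*) of all functions E* → ℝ (with pointwise operations, order, and product) containing the evaluation maps δ_x(x*) = x*(x) for x ∈ E that is a linear subspace closed under pointwise products and pointwise binary suprema. Then for every f ∈ V there exist x₁, …, xₙ ∈ E and a real polynomial p(t₁, …, tₙ) with nonnegative coefficients and zero constant term such that |f(x*)| ≤ p(|x*(x₁)|, …, |x*(xₙ)|) for every x* ∈ E*. -/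
open MvPolynomial

private def GoodP {n : ℕ} (p : MvPolynomial (Fin n) ℝ) : Prop :=
  (∀ m, 0 ≤ p.coeff m) ∧ p.coeff 0 = 0

private lemma goodP_rename {n m : ℕ} (g : Fin n → Fin m) (hg : Function.Injective g)
    (p : MvPolynomial (Fin n) ℝ) (hp : GoodP p) : GoodP (rename g p) := by
  constructor
  · intro d
    by_contra h
    push_neg at h
    obtain ⟨u, hu, hcu⟩ := coeff_rename_ne_zero g p d (ne_of_lt h)
    rw [← hu, coeff_rename_mapDomain g hg] at h
    exact absurd (hp.1 u) (not_le.mpr h)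
  · have : (0 : Fin m →₀ ℕ) = Finsupp.mapDomain g 0 := by simp
    rw [this, coeff_rename_mapDomain g hg, hp.2]

private def Dominated {E : Type} [NormedAddCommGroup E] [NormedSpace ℝ E]
    (f : (E →L[ℝ] ℝ) → ℝ) : Prop :=
  ∃ (n : ℕ) (x : Fin n → E) (p : MvPolynomial (Fin n) ℝ),
    GoodP p ∧ ∀ φ : E →L[ℝ] ℝ, |f φ| ≤ MvPolynomial.eval (fun i => |φ (x i)|) p

private lemma dominated_combine {E : Type} [NormedAddCommGroup E] [NormedSpace ℝ E]
    (f g : (E →L[ℝ] ℝ) → ℝ) (hf : Dominated f) (hg : Dominated g)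
    (h : (E →L[ℝ] ℝ) → ℝ) (hh : ∀ φ, |h φ| ≤ |f φ| + |g φ|) : Dominated h := by
  obtain ⟨n, x, p, hp, hpb⟩ := hf
  obtain ⟨m, y, q, hq, hqb⟩ := hg
  refine ⟨n + m, Fin.addCases x y,
    rename (Fin.castAdd m) p + rename (Fin.natAdd n) q, ?_, ?_⟩
  · have h1 := goodP_rename (Fin.castAdd m) (Fin.castAdd_injective n m) p hp
    have h2 := goodP_rename (Fin.natAdd n) (fun a b h => by have := congrArg Fin.val h; simp [Fin.ext_iff] at this ⊢; omega) q hq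
    constructor
    · intro d
      rw [coeff_add]
      exact add_nonneg (h1.1 d) (h2.1 d)
    · rw [coeff_add, h1.2, h2.2, add_zero]
  · intro φ
    rw [map_add, eval_rename, eval_rename]
    have e1 : ((fun i : Fin (n+m) => |φ (Fin.addCases x y i)|) ∘ Fin.castAdd m)
        = fun i => |φ (x i)| := by
      funext i; simp [Fin.addCases_left]
    have e2 : ((fun i : Fin (n+m) => |φ (Fin.addCases x y i)|) ∘ Fin.natAdd n)
        = fun i => |φ (y i)| := by
      funext i; simp [Fin.addCases_right]
    rw [e1, e2]
    exact (hh φ).trans (add_le_add (hpb φ) (hqb φ))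

private lemma eval_nonneg {n : ℕ} (p : MvPolynomial (Fin n) ℝ) (hp : GoodP p)
    (v : Fin n → ℝ) (hv : ∀ i, 0 ≤ v i) : 0 ≤ MvPolynomial.eval v p := by
  rw [eval_eq]
  apply Finset.sum_nonneg
  intro d _
  exact mul_nonneg (hp.1 d) (Finset.prod_nonneg fun i _ => pow_nonneg (hv i) _)

private lemma dominated_isSublatticeSubalgebra (E : Type) [NormedAddCommGroup E]
    [NormedSpace ℝ E] : IsSublatticeSubalgebra {f : (E →L[ℝ] ℝ) → ℝ | Dominated f} := by
  refine ⟨⟨0, Fin.elim0, 0, ⟨fun m => le_refl 0, rfl⟩, fun φ => by simp⟩, ?_, ?_, ?_, ?_⟩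
  · intro f g hf hg
    exact dominated_combine f g hf hg (f + g) fun φ => abs_add_le _ _
  · intro c f hf
    obtain ⟨n, x, p, hp, hpb⟩ := hf
    refine ⟨n, x, (C |c|) * p, ⟨?_, ?_⟩, ?_⟩
    · intro m
      rw [coeff_C_mul]
      exact mul_nonneg (abs_nonneg c) (hp.1 m)
    · rw [coeff_C_mul, hp.2, mul_zero]
    · intro φ
      rw [map_mul, eval_C]
      calc |(c • f) φ| = |c| * |f φ| := by simp [abs_mul]
        _ ≤ |c| * MvPolynomial.eval (fun i => |φ (x i)|) p :=
          mul_le_mul_of_nonneg_left (hpb φ) (abs_nonneg c)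
  · intro f g hf hg
    obtain ⟨n, x, p, hp, hpb⟩ := hf
    obtain ⟨m, y, q, hq, hqb⟩ := hg
    refine ⟨n + m, Fin.addCases x y,
      rename (Fin.castAdd m) p * rename (Fin.natAdd n) q, ?_, ?_⟩
    · have h1 := goodP_rename (Fin.castAdd m) (Fin.castAdd_injective n m) p hp
      have h2 := goodP_rename (Fin.natAdd n) (fun a b h => by have := congrArg Fin.val h; simp [Fin.ext_iff] at this ⊢; omega) q hq
      constructor
      · intro d
        rw [coeff_mul]
        apply Finset.sum_nonneg
        intro e _
        exact mul_nonneg (h1.1 e.1) (h2.1 e.2)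
      · have : constantCoeff (rename (Fin.castAdd m) p * rename (Fin.natAdd n) q)
            = constantCoeff (rename (Fin.castAdd m) p) * constantCoeff (rename (Fin.natAdd n) q) :=
          map_mul _ _ _
        simpa [constantCoeff_eq, hp.2] using this
    · intro φ
      rw [map_mul, eval_rename, eval_rename]
      have e1 : ((fun i : Fin (n+m) => |φ (Fin.addCases x y i)|) ∘ Fin.castAdd m)
          = fun i => |φ (x i)| := by
        funext i; simp [Fin.addCases_left]
      have e2 : ((fun i : Fin (n+m) => |φ (Fin.addCases x y i)|) ∘ Fin.natAdd n)
          = fun i => |φ (y i)| := by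
        funext i; simp [Fin.addCases_right]
      rw [e1, e2]
      calc |(f * g) φ| = |f φ| * |g φ| := by simp [abs_mul]
        _ ≤ _ := mul_le_mul (hpb φ) (hqb φ) (abs_nonneg _)
            ((abs_nonneg _).trans (hpb φ))
  · intro f g hf hg
    refine dominated_combine f g hf hg (f ⊔ g) fun φ => ?_
    have : (f ⊔ g) φ = max (f φ) (g φ) := rfl
    rw [this]
    calc |max (f φ) (g φ)| ≤ max |f φ| |g φ| := by
          rcases max_choice (f φ) (g φ) with h | h <;> rw [h]
          · exact le_max_left _ _
          · exact le_max_right _ _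
      _ ≤ |f φ| + |g φ| := max_le (le_add_of_nonneg_right (abs_nonneg _))
          (le_add_of_nonneg_left (abs_nonneg _))

theorem stmt5 (E : Type) [NormedAddCommGroup E] [NormedSpace ℝ E] [CompleteSpace E]
    (f : (E →L[ℝ] ℝ) → ℝ) (hf : f ∈ freeVLA E) :
    ∃ (n : ℕ) (x : Fin n → E) (p : MvPolynomial (Fin n) ℝ),
      (∀ m, 0 ≤ p.coeff m) ∧
      p.coeff 0 = 0 ∧
      ∀ φ : E →L[ℝ] ℝ, |f φ| ≤ MvPolynomial.eval (fun i => |φ (x i)|) p := by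
  have hgen : Set.range (evalMapD E) ⊆ {h : (E →L[ℝ] ℝ) → ℝ | Dominated h} := by
    rintro _ ⟨x, rfl⟩
    refine ⟨1, fun _ => x, X 0, ⟨?_, ?_⟩, ?_⟩
    · intro m
      rw [coeff_X']
      split <;> norm_num
    · rw [coeff_X']
      simp [Finsupp.single_eq_zero]
    · intro φ
      simp [evalMapD]
  have hmem : f ∈ {h : (E →L[ℝ] ℝ) → ℝ | Dominated h} :=
    hf _ ⟨dominated_isSublatticeSubalgebra E, hgen⟩
  obtain ⟨n, x, p, ⟨h1, h2⟩, h3⟩ := hmem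
  exact ⟨n, x, p, h1, h2, h3⟩
end
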